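/- Let λ be a partition of n, S(λ) the seminormal Specht module for H_n = H_{F,q}(S_n), and τ: S(λ) → S(λ') the F-linear map with v_t ↦ v_{t'}. Then for every w ∈ S_n and every standard λ-tableau t, v_t T_w^# = τ(v_{t'} T_w). -/

import Mathlib

open scoped Classical

noncomputable section

/-- The simple transposition swapping `i` and `i+1` (0-indexed; this is the Coxeter
generator `s_{i+1}` in 1-indexed notation) in the symmetric group on `Fin n`. -/
def sTr (n i : ℕ) : Equiv.Perm (Fin n) :=
  if h : i + 1 < n then Equiv.swap ⟨i, Nat.lt_of_succ_lt h⟩ ⟨i + 1, h⟩ else 1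

/-- The Coxeter length: the minimal length of an expression of `w` as a product of
simple transpositions. -/
def len (n : ℕ) (w : Equiv.Perm (Fin n)) : ℕ :=
  sInf {k | ∃ l : List ℕ, l.length = k ∧ (∀ i ∈ l, i + 1 < n) ∧ w = (l.map (sTr n)).prod}

/-- The (strict) Bruhat order on the symmetric group: `y < z` iff `z` can be obtained
from `y` by successively multiplying by reflections, increasing the length at each step. -/
def bruhatLT (n : ℕ) (y z : Equiv.Perm (Fin n)) : Prop :=
  Relation.TransGen
    (fun a b => (∃ u v : Fin n, u ≠ v ∧ b = a * Equiv.swap u v) ∧ len n a < len n b) y z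

/-- `y ≺ z` iff `y < z` in the Bruhat order and `ℓ(y) ≢ ℓ(z) (mod 2)`. -/
def precLT (n : ℕ) (y z : Equiv.Perm (Fin n)) : Prop :=
  bruhatLT n y z ∧ ¬ (len n y % 2 = len n z % 2)

/-- The element `A_z = ½(T_z + ε_z T_z^#)`. -/
def Aelt {R H : Type*} [CommRing R] [Ring H] [Algebra R H] (n : ℕ)
    (T : Equiv.Perm (Fin n) → H) (hash : H ≃ₐ[R] H) (z : Equiv.Perm (Fin n)) : H :=
  Ring.inverse (2 : R) • (T z + ((-1 : R) ^ len n z) • hash (T z))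

/-- The `ε`-eigenspace `H^ε = {h ∈ H : h^# = ε h}` of an algebra automorphism,
viewed as an `R`-submodule. -/
def fixedSubmodule {R H : Type*} [CommRing R] [Ring H] [Algebra R H]
    (φ : H ≃ₐ[R] H) (ε : R) : Submodule R H where
  carrier := {x | φ x = ε • x}
  add_mem' := by
    intro a b ha hb
    simp only [Set.mem_setOf_eq] at *
    rw [map_add, ha, hb, smul_add]
  zero_mem' := by simp
  smul_mem' := by
    intro c a ha
    simp only [Set.mem_setOf_eq] at *
    rw [map_smul, ha, smul_smul, smul_smul, mul_comm]

/-- The quantum integer `[k] = q + q³ + ⋯ + q^{2k−1}` for `k ≥ 0`, and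
`[k] = −q⁻¹ − q⁻³ − ⋯ − q^{2k+1}` for `k < 0`. -/
def qint {F : Type*} [Field F] (q : F) : ℤ → F
  | Int.ofNat k => ∑ j ∈ Finset.range k, q ^ (2 * j + 1)
  | Int.negSucc k => -∑ j ∈ Finset.range (k + 1), (q ^ (2 * j + 1))⁻¹

/-- The coefficients `α_k = √(−1)·√([k+1])·√([k−1])/[k]` for `k > 0`, with
`α_{−k} = −α_k` (and `α_0 = 0`). -/
def alph {F : Type*} [Field F] (q sqm1 : F) (sq : ℕ → F) (m : ℤ) : F :=
  if 0 ≤ m then sqm1 * sq (m.toNat + 1) * sq (m.toNat - 1) / qint q m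
  else -(sqm1 * sq ((-m).toNat + 1) * sq ((-m).toNat - 1) / qint q (-m))

/-- A standard `μ`-tableau, recorded by the positions of its entries: `pos k` is the
cell containing the entry `k+1`.  Standardness means the entries are distinct cells
of `μ` and `t(r,c) < t(s,d)` whenever `(r,c) ≠ (s,d)`, `r ≤ s` and `c ≤ d`. -/
def IsStdTab (μ : YoungDiagram) {n : ℕ} (pos : Fin n → ℕ × ℕ) : Prop :=
  Function.Injective pos ∧ (∀ k, pos k ∈ μ) ∧
    ∀ j k : Fin n, (pos j).1 ≤ (pos k).1 → (pos j).2 ≤ (pos k).2 → pos j ≠ pos k → j < k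

/-- The type of standard `μ`-tableaux with `n` entries. -/
def StdTab (μ : YoungDiagram) (n : ℕ) : Type :=
  {pos : Fin n → ℕ × ℕ // IsStdTab μ pos}

/-- The content `c_t(m+1) = c − r` of the entry `m+1`, located in cell `(r, c)`
(and junk value `0` when `m ≥ n`). -/
def contN {n : ℕ} (pos : Fin n → ℕ × ℕ) (m : ℕ) : ℤ :=
  if h : m < n then ((pos ⟨m, h⟩).2 : ℤ) - ((pos ⟨m, h⟩).1 : ℤ) else 0

/-- The axial distance `ρ_t(i+1) = c_t(i+1) − c_t(i+2)` (0-indexed `i`). -/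
def rhoAx {n : ℕ} (pos : Fin n → ℕ × ℕ) (i : ℕ) (hi : i + 1 < n) : ℤ :=
  (((pos ⟨i, Nat.lt_of_succ_lt hi⟩).2 : ℤ) - ((pos ⟨i, Nat.lt_of_succ_lt hi⟩).1 : ℤ))
    - (((pos ⟨i + 1, hi⟩).2 : ℤ) - ((pos ⟨i + 1, hi⟩).1 : ℤ))

/-- The tableau `t·s_{i+1}`, obtained from `t` by swapping the entries `i+1`, `i+2`. -/
def swapEnt {n : ℕ} (pos : Fin n → ℕ × ℕ) (i : ℕ) (hi : i + 1 < n) : Fin n → ℕ × ℕ :=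
  pos ∘ (Equiv.swap ⟨i, Nat.lt_of_succ_lt hi⟩ ⟨i + 1, hi⟩)

/-- The conjugate of a tableau: the entry in cell `(r,c)` moves to cell `(c,r)`. -/
def conjPos {n : ℕ} (pos : Fin n → ℕ × ℕ) : Fin n → ℕ × ℕ :=
  fun k => ((pos k).2, (pos k).1)

lemma isStdTab_conj {μ : YoungDiagram} {n : ℕ} {pos : Fin n → ℕ × ℕ}
    (h : IsStdTab μ pos) : IsStdTab μ.transpose (conjPos pos) := by
  obtain ⟨hinj, hmem, hord⟩ := h
  refine ⟨?_, ?_, ?_⟩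
  · intro a b hab
    apply hinj
    have h1 : ((pos a).2, (pos a).1) = ((pos b).2, (pos b).1) := hab
    have h2 := congrArg Prod.snd h1
    have h3 := congrArg Prod.fst h1
    simp only at h2 h3
    exact Prod.ext h2 h3
  · intro k
    rw [YoungDiagram.mem_transpose]
    exact hmem k
  · intro j k h1 h2 hne
    refine hord j k h2 h1 ?_
    intro hc
    exact hne (by rw [conjPos, conjPos, hc])

/-- The conjugate standard tableau `t' ∈ Std(μ')` of `t ∈ Std(μ)`. -/
def conjTab {μ : YoungDiagram} {n : ℕ} (t : StdTab μ n) : StdTab μ.transpose n :=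
  ⟨conjPos t.val, isStdTab_conj t.prop⟩

/-- The conjugate standard tableau, going from `Std(μ')` back to `Std(μ)`. -/
def backConjTab {μ : YoungDiagram} {n : ℕ} (s : StdTab μ.transpose n) : StdTab μ n :=
  ⟨conjPos s.val, by
    have h := isStdTab_conj s.prop
    rwa [YoungDiagram.transpose_transpose] at h⟩

/-- The linear map `τ : S(μ') → S(μ)` with `v_s ↦ v_{s'}`. -/
def crossTau (F : Type*) [Field F] (μ : YoungDiagram) (n : ℕ) :
    (StdTab μ.transpose n → F) →ₗ[F] (StdTab μ n → F) where
  toFun f := fun t => f (conjTab t)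
  map_add' _ _ := rfl
  map_smul' _ _ := rfl

/-- The linear map `τ : S(μ) → S(μ')` with `v_t ↦ v_{t'}`. -/
def fwdTau (F : Type*) [Field F] (μ : YoungDiagram) (n : ℕ) :
    (StdTab μ n → F) →ₗ[F] (StdTab μ.transpose n → F) where
  toFun f := fun s => f (backConjTab s)
  map_add' _ _ := rfl
  map_smul' _ _ := rfl

/-- For a self-conjugate shape, the conjugate tableau `t'` of `t`, as a standard
tableau of the same shape. -/
def selfConjTab {μ : YoungDiagram} (hself : μ.transpose = μ) {n : ℕ}
    (t : StdTab μ n) : StdTab μ n :=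
  ⟨conjPos t.val, by have h := isStdTab_conj t.prop; rwa [hself] at h⟩

/-- For a self-conjugate shape, the linear involution `τ` of `S(μ)` with `v_t ↦ v_{t'}`. -/
def selfTau {F : Type*} [Field F] {μ : YoungDiagram} (hself : μ.transpose = μ) (n : ℕ) :
    (StdTab μ n → F) →ₗ[F] (StdTab μ n → F) where
  toFun f := fun t => f (selfConjTab hself t)
  map_add' _ _ := rfl
  map_smul' _ _ := rfl

/-- `act` is the (right) seminormal representation of the Hecke algebra on the Specht
module `S(μ)`, with basis `{v_t}` indexed by the standard `μ`-tableaux, on which the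
generators act by `v_t T_i = (−1/[ρ_t(i)]) v_t + α_t(i) v_{t·s_i}`. -/
def SpechtRep {F : Type*} [Field F] (q sqm1 : F) (sq : ℕ → F) (n : ℕ)
    {H : Type*} [Ring H] [Algebra F H] (T : Equiv.Perm (Fin n) → H)
    (μ : YoungDiagram) (act : H →ₗ[F] Module.End F (StdTab μ n → F)) : Prop :=
  act 1 = 1 ∧ (∀ a b : H, act (a * b) = act b * act a) ∧
    ∀ (i : ℕ) (hi : i + 1 < n) (t : StdTab μ n),
      act (T (sTr n i)) (Pi.single t (1 : F) : StdTab μ n → F) =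
        (-(qint q (rhoAx t.val i hi))⁻¹) • (Pi.single t (1 : F) : StdTab μ n → F) +
          (if h : IsStdTab μ (swapEnt t.val i hi) then
            alph q sqm1 sq (rhoAx t.val i hi) •
              (Pi.single (⟨swapEnt t.val i hi, h⟩ : StdTab μ n) (1 : F) : StdTab μ n → F)
           else 0)

/-!
On a generator, the quadratic relation makes `T_s - (q - q⁻¹)` the inverse of `T_s`, so
`T_s^# = (q - q⁻¹) - T_s`. Conjugating a tableau negates every axial distance, and the identities
`(q - q⁻¹) + 1/[ρ] = -1/[-ρ]` and `α_{-ρ} = -α_ρ` then say exactly that `τ` intertwines the action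
of `T_s^#` on `S(λ)` with that of `T_s` on `S(λ')`. Both `h ↦ (action of h^#)` and
`h ↦ τ ∘ (action of h) ∘ τ⁻¹` are anti-multiplicative, and `T_w` is the product of the `T_s` along
a reduced word for `w`, so the identity propagates from generators to all `T_w`.
-/

section QuantumIntegers

variable {F : Type*} [Field F] {q : F}

lemma qint_natCast (k : ℕ) :
    qint q k = ∑ j ∈ Finset.range k, q ^ (2 * j + 1) := rfl

@[simp]
lemma qint_zero : qint q 0 = 0 := Finset.sum_range_zero _

lemma qint_neg_natCast (hq : q ≠ 0) (k : ℕ) : qint q (-k) = -(q ^ (2 * k))⁻¹ * qint q k := by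
  rcases k with _ | k
  · simp
  rw [show -((k + 1 : ℕ) : ℤ) = Int.negSucc k by rfl, qint, qint_natCast, neg_mul,
    Finset.mul_sum, ← Finset.sum_range_reflect]
  congr 1
  refine Finset.sum_congr rfl fun j hj => ?_
  have hj : j ≤ k := Nat.lt_succ_iff.mp (Finset.mem_range.mp hj)
  rw [show 2 * (k + 1) = 2 * (k + 1 - 1 - j) + 1 + (2 * j + 1) by omega,
    pow_add q (2 * (k + 1 - 1 - j) + 1), mul_inv]
  field_simp

lemma qint_neg (hq : q ≠ 0) (m : ℤ) : qint q (-m) = -(q ^ (2 * m))⁻¹ * qint q m := by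
  obtain ⟨k, rfl | rfl⟩ := Int.eq_nat_or_neg m
  · exact_mod_cast qint_neg_natCast hq k
  · rw [neg_neg, qint_neg_natCast hq, mul_neg, zpow_neg, inv_inv, ← mul_assoc]
    field_simp
    norm_cast

lemma one_add_sub_inv_mul_qint_natCast (hq : q ≠ 0) (k : ℕ) :
    1 + (q - q⁻¹) * qint q k = q ^ (2 * k) := by
  induction k with
  | zero => simp
  | succ k ih =>
    rw [qint_natCast, Finset.sum_range_succ, ← qint_natCast, mul_add, ← add_assoc, ih]
    field_simp
    ring

lemma one_add_sub_inv_mul_qint (hq : q ≠ 0) (m : ℤ) :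
    1 + (q - q⁻¹) * qint q m = q ^ (2 * m) := by
  obtain ⟨k, rfl | rfl⟩ := Int.eq_nat_or_neg m
  · exact_mod_cast one_add_sub_inv_mul_qint_natCast hq k
  · rw [qint_neg_natCast hq]
    have h : (q - q⁻¹) * qint q k = q ^ (2 * k) - 1 := by
      linear_combination one_add_sub_inv_mul_qint_natCast hq k
    rw [mul_neg, zpow_neg, mul_left_comm, h]
    norm_cast
    field_simp
    ring

lemma sub_inv_add_inv_qint (hq : q ≠ 0) {m : ℤ} (hm : qint q m ≠ 0) :
    (q - q⁻¹) + (qint q m)⁻¹ = -(qint q (-m))⁻¹ := by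
  rw [qint_neg hq, ← one_add_sub_inv_mul_qint hq m]
  field_simp
  ring

lemma qint_ne_zero_of_natAbs (hq : q ≠ 0) {m : ℤ} (hm : qint q m.natAbs ≠ 0) : qint q m ≠ 0 := by
  rcases Int.natAbs_eq m with h | h <;> rw [h]
  · exact hm
  · rw [qint_neg hq]
    exact mul_ne_zero (neg_ne_zero.mpr (inv_ne_zero (zpow_ne_zero _ hq))) hm

lemma alph_neg {sqm1 : F} {sq : ℕ → F} (hsq0 : sq 0 = 0) (m : ℤ) :
    alph q sqm1 sq (-m) = -alph q sqm1 sq m := by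
  rcases lt_trichotomy m 0 with h | rfl | h
  · simp [alph, h.not_ge, h.le]
  · simp [alph, hsq0]
  · simp [alph, h.le, h]

end QuantumIntegers

section Tableaux

variable {μ : YoungDiagram} {n : ℕ}

lemma YoungDiagram.snd_add_fst_lt_card {p r : ℕ × ℕ} (hp : p ∈ μ) (hr : r ∈ μ) :
    p.2 + r.1 < μ.card := by
  let hook : ℕ → ℕ × ℕ := fun k => if k ≤ p.2 then (0, k) else (k - p.2, 0)
  have hmaps : Set.MapsTo hook (Finset.range (p.2 + r.1 + 1)) μ.cells := by
    intro k hk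
    simp only [Finset.coe_range, Set.mem_Iio] at hk
    simp only [hook, Finset.mem_coe, YoungDiagram.mem_cells]
    split_ifs with hkp
    · exact μ.up_left_mem (Nat.zero_le _) hkp hp
    · exact μ.up_left_mem (by omega) (Nat.zero_le _) hr
  have hinj : Set.InjOn hook (Finset.range (p.2 + r.1 + 1)) := by
    intro a _ b _ hab
    simp only [hook] at hab
    split_ifs at hab <;> simp only [Prod.mk.injEq] at hab <;> omega
  simpa using Finset.card_le_card_of_injOn hook hmaps hinj

lemma conjPos_conjPos (pos : Fin n → ℕ × ℕ) : conjPos (conjPos pos) = pos := rfl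

lemma isStdTab_conjPos_iff {pos : Fin n → ℕ × ℕ} :
    IsStdTab μ.transpose (conjPos pos) ↔ IsStdTab μ pos := by
  refine ⟨fun h => ?_, isStdTab_conj⟩
  simpa only [YoungDiagram.transpose_transpose, conjPos_conjPos] using isStdTab_conj h

lemma rhoAx_conjPos (pos : Fin n → ℕ × ℕ) (i : ℕ) (hi : i + 1 < n) :
    rhoAx (conjPos pos) i hi = -rhoAx pos i hi := by
  simp only [rhoAx, conjPos]
  ring

lemma backConjTab_conjTab (t : StdTab μ n) : backConjTab (conjTab t) = t := rfl

def conjTabEquiv (μ : YoungDiagram) (n : ℕ) : StdTab μ n ≃ StdTab μ.transpose n where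
  toFun := conjTab
  invFun := backConjTab
  left_inv _ := rfl
  right_inv _ := rfl

instance (μ : YoungDiagram) (n : ℕ) : Finite (StdTab μ n) :=
  Finite.of_injective
    (fun t k => (⟨t.val k, (YoungDiagram.mem_cells _).mpr (t.prop.2.1 k)⟩ : μ.cells))
    fun _ _ h => Subtype.ext (funext fun k => congrArg Subtype.val (congrFun h k))

namespace IsStdTab

variable {pos : Fin n → ℕ × ℕ}

lemma exists_eq_of_mem (h : IsStdTab μ pos) (hμ : μ.card = n) {p : ℕ × ℕ} (hp : p ∈ μ) :
    ∃ k, pos k = p := by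
  let cell : Fin n → μ.cells := fun k => ⟨pos k, (YoungDiagram.mem_cells _).mpr (h.2.1 k)⟩
  have hbij : Function.Bijective cell :=
    (Fintype.bijective_iff_injective_and_card cell).mpr
      ⟨fun a b hab => h.1 (congrArg Subtype.val hab), by simpa using hμ.symm⟩
  obtain ⟨k, hk⟩ := hbij.2 ⟨p, (YoungDiagram.mem_cells _).mpr hp⟩
  exact ⟨k, congrArg Subtype.val hk⟩

lemma exists_entry_between (h : IsStdTab μ pos) (hμ : μ.card = n) {j k : Fin n}
    (hrow : (pos j).1 < (pos k).1) (hcol : (pos j).2 < (pos k).2) : ∃ m, j < m ∧ m < k := by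
  obtain ⟨m, hm⟩ := h.exists_eq_of_mem hμ (μ.up_left_mem le_rfl hcol.le (h.2.1 k))
  refine ⟨m, h.2.2 j m ?_ ?_ ?_, h.2.2 m k ?_ ?_ ?_⟩ <;> rw [hm] <;> simp [Prod.ext_iff] <;> omega

lemma rhoAx_ne_zero (h : IsStdTab μ pos) (hμ : μ.card = n) (i : ℕ) (hi : i + 1 < n) :
    rhoAx pos i hi ≠ 0 := by
  intro h0
  simp only [rhoAx] at h0
  rcases lt_trichotomy (pos ⟨i, by omega⟩).1 (pos ⟨i + 1, hi⟩).1 with hlt | heq | hgt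
  · obtain ⟨m, h1, h2⟩ := h.exists_entry_between hμ hlt (by omega)
    simp only [Fin.lt_def] at h1 h2
    omega
  · have := h.1 (Prod.ext heq (by omega))
    simp [Fin.ext_iff] at this
  · obtain ⟨m, h1, h2⟩ := h.exists_entry_between hμ hgt (by omega)
    simp only [Fin.lt_def] at h1 h2
    omega

lemma natAbs_rhoAx_lt (h : IsStdTab μ pos) (hμ : μ.card = n) (i : ℕ) (hi : i + 1 < n) :
    (rhoAx pos i hi).natAbs < n := by
  have h1 := YoungDiagram.snd_add_fst_lt_card (h.2.1 ⟨i, by omega⟩) (h.2.1 ⟨i + 1, hi⟩)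
  have h2 := YoungDiagram.snd_add_fst_lt_card (h.2.1 ⟨i + 1, hi⟩) (h.2.1 ⟨i, by omega⟩)
  simp only [rhoAx]
  omega

end IsStdTab

end Tableaux

section Length

variable {n : ℕ}

lemma sTr_mul_self (n i : ℕ) : sTr n i * sTr n i = 1 := by
  unfold sTr
  split_ifs
  · exact Equiv.swap_mul_self _ _
  · rfl

lemma sTr_inv (n i : ℕ) : (sTr n i)⁻¹ = sTr n i :=
  inv_eq_of_mul_eq_one_right (sTr_mul_self n i)

lemma sTr_ne_one {i : ℕ} (hi : i + 1 < n) : sTr n i ≠ 1 := by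
  rw [sTr, dif_pos hi, Ne, Equiv.swap_eq_one_iff, Fin.ext_iff]
  simp

lemma exists_word_sTr (w : Equiv.Perm (Fin n)) :
    ∃ l : List ℕ, (∀ i ∈ l, i + 1 < n) ∧ w = (l.map (sTr n)).prod := by
  rcases n with _ | m
  · exact ⟨[], by simp, Subsingleton.elim _ _⟩
  have hw : w ∈ Submonoid.closure (Set.range fun i : Fin m ↦ Equiv.swap i.castSucc i.succ) := by
    rw [Equiv.Perm.mclosure_swap_castSucc_succ]; trivial
  induction hw using Submonoid.closure_induction with
  | mem x hx =>
    obtain ⟨i, rfl⟩ := hx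
    refine ⟨[i.val], by simp, ?_⟩
    simp only [List.map_cons, List.map_nil, List.prod_cons, List.prod_nil, mul_one, sTr,
      dif_pos (Nat.succ_lt_succ i.isLt)]
    rfl
  | one => exact ⟨[], by simp, rfl⟩
  | mul x y _ _ ihx ihy =>
    obtain ⟨lx, hlx, rfl⟩ := ihx
    obtain ⟨ly, hly, rfl⟩ := ihy
    refine ⟨lx ++ ly, fun i hi => ?_, by rw [List.map_append, List.prod_append]⟩
    exact (List.mem_append.mp hi).elim (hlx i) (hly i)

lemma len_le_length {w : Equiv.Perm (Fin n)} {l : List ℕ} (hl : ∀ i ∈ l, i + 1 < n)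
    (hw : w = (l.map (sTr n)).prod) : len n w ≤ l.length :=
  Nat.sInf_le ⟨l, rfl, hl, hw⟩

lemma exists_reduced_word (w : Equiv.Perm (Fin n)) :
    ∃ l : List ℕ, l.length = len n w ∧ (∀ i ∈ l, i + 1 < n) ∧ w = (l.map (sTr n)).prod := by
  obtain ⟨l, hl, hw⟩ := exists_word_sTr w
  exact Nat.sInf_mem (s := {k | ∃ l : List ℕ, l.length = k ∧ (∀ i ∈ l, i + 1 < n) ∧
    w = (l.map (sTr n)).prod}) ⟨l.length, l, rfl, hl, hw⟩

lemma len_one : len n 1 = 0 :=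
  Nat.eq_zero_of_le_zero (len_le_length (l := []) (by simp) rfl)

lemma len_sTr {i : ℕ} (hi : i + 1 < n) : len n (sTr n i) = 1 := by
  have hle : len n (sTr n i) ≤ 1 := len_le_length (l := [i]) (by simpa using hi) (by simp)
  have hne : len n (sTr n i) ≠ 0 := by
    intro h0
    obtain ⟨l, hl, -, hw⟩ := exists_reduced_word (sTr n i)
    rw [h0, List.length_eq_zero_iff] at hl
    exact sTr_ne_one hi (by simpa [hl] using hw)
  omega

lemma len_mul_sTr_le (w : Equiv.Perm (Fin n)) {i : ℕ} (hi : i + 1 < n) :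
    len n (w * sTr n i) ≤ len n w + 1 := by
  obtain ⟨l, hl, hvalid, rfl⟩ := exists_reduced_word w
  have hvalid' : ∀ j ∈ l ++ [i], j + 1 < n := by
    simpa [List.mem_append, or_imp, forall_and] using ⟨hvalid, hi⟩
  simpa [← hl] using len_le_length hvalid' (by simp)

end Length

section HeckeAlgebra

variable {F H : Type*} [Field F] [Ring H] [Algebra F H] {n : ℕ} {T : Equiv.Perm (Fin n) → H}

lemma T_prod_of_reduced (hT1 : T 1 = 1)
    (hmul1 : ∀ (w : Equiv.Perm (Fin n)) (i : ℕ), i + 1 < n →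
      len n (w * sTr n i) = len n w + 1 → T w * T (sTr n i) = T (w * sTr n i))
    {l : List ℕ} (hl : ∀ i ∈ l, i + 1 < n) (hred : l.length = len n (l.map (sTr n)).prod) :
    T (l.map (sTr n)).prod = (l.map fun i => T (sTr n i)).prod := by
  induction l using List.reverseRecOn with
  | nil => simpa using hT1
  | append_singleton l i ih =>
    have hi : i + 1 < n := hl i (by simp)
    have hl' : ∀ j ∈ l, j + 1 < n := fun j hj => hl j (List.mem_append_left _ hj)
    simp only [List.map_append, List.map_cons, List.map_nil, List.prod_append, List.prod_cons,
      List.prod_nil, mul_one, List.length_append, List.length_singleton] at hred ⊢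
    have hle := len_le_length hl' rfl
    have hmul_le := len_mul_sTr_le (l.map (sTr n)).prod hi
    rw [← ih hl' (by omega), hmul1 _ i hi (by omega)]

variable {q : F}

lemma T_sTr_mul_self (hT1 : T 1 = 1)
    (hmul2 : ∀ (w : Equiv.Perm (Fin n)) (i : ℕ), i + 1 < n →
      len n (w * sTr n i) + 1 = len n w →
      T w * T (sTr n i) = T (w * sTr n i) + (q - q⁻¹) • T w)
    {i : ℕ} (hi : i + 1 < n) :
    T (sTr n i) * T (sTr n i) = 1 + (q - q⁻¹) • T (sTr n i) := by
  simpa [sTr_mul_self, hT1] using hmul2 (sTr n i) i hi (by rw [sTr_mul_self, len_one, len_sTr hi])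

lemma hash_T_sTr (hT1 : T 1 = 1)
    (hmul2 : ∀ (w : Equiv.Perm (Fin n)) (i : ℕ), i + 1 < n →
      len n (w * sTr n i) + 1 = len n w →
      T w * T (sTr n i) = T (w * sTr n i) + (q - q⁻¹) • T w)
    (hash : H ≃ₐ[F] H)
    (hhash : ∀ w, hash (T w) = ((-1 : F) ^ len n w) • Ring.inverse (T w⁻¹))
    {i : ℕ} (hi : i + 1 < n) :
    hash (T (sTr n i)) = (q - q⁻¹) • 1 - T (sTr n i) := by
  have hsq := T_sTr_mul_self hT1 hmul2 hi
  let u : Hˣ :=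
    { val := T (sTr n i)
      inv := T (sTr n i) - (q - q⁻¹) • 1
      val_inv := by rw [mul_sub, hsq, mul_smul_comm, mul_one, add_sub_cancel_right]
      inv_val := by rw [sub_mul, hsq, smul_mul_assoc, one_mul, add_sub_cancel_right] }
  rw [hhash, sTr_inv, len_sTr hi, pow_one, neg_one_smul, show T (sTr n i) = u from rfl,
    Ring.inverse_unit]
  exact neg_sub _ _

end HeckeAlgebra

lemma map_list_prod_eq_of_antiMul {M N : Type*} [Monoid M] [Monoid N] {f g : M → N}
    (hf1 : f 1 = 1) (hg1 : g 1 = 1) (hf : ∀ a b, f (a * b) = f b * f a)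
    (hg : ∀ a b, g (a * b) = g b * g a) {l : List M} (hl : ∀ x ∈ l, f x = g x) :
    f l.prod = g l.prod := by
  induction l with
  | nil => rw [List.prod_nil, hf1, hg1]
  | cons x l ih =>
    rw [List.prod_cons, hf, hg, ih fun y hy => hl y (List.mem_cons_of_mem x hy),
      hl x List.mem_cons_self]

section SpechtModule

variable {F : Type*} [Field F] {μ : YoungDiagram} {n : ℕ}

def tauEquiv (F : Type*) [Field F] (μ : YoungDiagram) (n : ℕ) :
    (StdTab μ.transpose n → F) ≃ₗ[F] (StdTab μ n → F) :=
  LinearEquiv.funCongrLeft F F (conjTabEquiv μ n)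

lemma tauEquiv_apply (f : StdTab μ.transpose n → F) : tauEquiv F μ n f = crossTau F μ n f := rfl

lemma crossTau_single (s : StdTab μ.transpose n) (c : F) :
    crossTau F μ n (Pi.single s c) = Pi.single (backConjTab s) c :=
  Pi.single_comp_equiv (conjTabEquiv μ n) s c

lemma tauEquiv_symm_single (t : StdTab μ n) (c : F) :
    (tauEquiv F μ n).symm (Pi.single t c) = Pi.single (conjTab t) c :=
  Pi.single_comp_equiv (conjTabEquiv μ n).symm t c

variable {q sqm1 : F} {sq : ℕ → F} {H : Type*} [Ring H] [Algebra F H]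
  {T : Equiv.Perm (Fin n) → H}

lemma crossTau_act_T_sTr_single (hq : q ≠ 0)
    (hqint : ∀ k : ℕ, 1 ≤ k → k ≤ n → qint q (k : ℤ) ≠ 0) (hsq0 : sq 0 = 0) (hμ : μ.card = n)
    {act : H →ₗ[F] Module.End F (StdTab μ n → F)} (hact : SpechtRep q sqm1 sq n T μ act)
    {act' : H →ₗ[F] Module.End F (StdTab μ.transpose n → F)}
    (hact' : SpechtRep q sqm1 sq n T μ.transpose act') {i : ℕ} (hi : i + 1 < n)
    (t : StdTab μ n) :
    crossTau F μ n (act' (T (sTr n i)) (Pi.single (conjTab t) 1)) =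
      (q - q⁻¹) • Pi.single t 1 - act (T (sTr n i)) (Pi.single t 1) := by
  have hρ : qint q (rhoAx t.val i hi) ≠ 0 :=
    qint_ne_zero_of_natAbs hq (hqint _ (Int.natAbs_pos.mpr (t.prop.rhoAx_ne_zero hμ i hi))
      (t.prop.natAbs_rhoAx_lt hμ i hi).le)
  have hρ' : rhoAx (conjTab t).val i hi = -rhoAx t.val i hi := rhoAx_conjPos _ _ _
  rw [hact.2.2 i hi t, hact'.2.2 i hi (conjTab t), hρ', alph_neg hsq0,
    ← sub_inv_add_inv_qint hq hρ]
  by_cases hstd : IsStdTab μ (swapEnt t.val i hi)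
  · have hstd' : IsStdTab μ.transpose (swapEnt (conjTab t).val i hi) :=
      isStdTab_conjPos_iff.mpr hstd
    have hback : backConjTab (⟨_, hstd'⟩ : StdTab μ.transpose n) =
        (⟨swapEnt t.val i hi, hstd⟩ : StdTab μ n) := rfl
    rw [dif_pos hstd, dif_pos hstd', map_add, map_smul, map_smul, crossTau_single,
      backConjTab_conjTab]
    -- `SpechtRep` indexes this `Pi.single` by the subtype underlying `StdTab`, so `rw` misses it
    erw [crossTau_single, hback]
    module
  · have hstd' : ¬IsStdTab μ.transpose (swapEnt (conjTab t).val i hi) :=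
      isStdTab_conjPos_iff.not.mpr hstd
    rw [dif_neg hstd, dif_neg hstd', add_zero, add_zero, map_smul, crossTau_single,
      backConjTab_conjTab]
    module

end SpechtModule

theorem specht_hash_twist_general
    {F : Type*} [Field F] (q : F) (hq0 : q ≠ 0) (n : ℕ)
    (hqint : ∀ k : ℕ, 1 ≤ k → k ≤ n → qint q (k : ℤ) ≠ 0)
    -- the chosen square roots √(−1) and √([k]) in F
    (sqm1 : F)
    (sq : ℕ → F) (hsq0 : sq 0 = 0)
    {H : Type*} [Ring H] [Algebra F H]
    -- the Iwahori–Hecke algebra of type A with its basis of standard elements T_w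
    (T : Equiv.Perm (Fin n) → H)
    (hT1 : T 1 = 1)
    (hmul1 : ∀ (w : Equiv.Perm (Fin n)) (i : ℕ), i + 1 < n →
      len n (w * sTr n i) = len n w + 1 → T w * T (sTr n i) = T (w * sTr n i))
    (hmul2 : ∀ (w : Equiv.Perm (Fin n)) (i : ℕ), i + 1 < n →
      len n (w * sTr n i) + 1 = len n w →
      T w * T (sTr n i) = T (w * sTr n i) + (q - q⁻¹) • T w)
    -- the hash involution
    (hash : H ≃ₐ[F] H)
    (hhash : ∀ w, hash (T w) = ((-1 : F) ^ len n w) • Ring.inverse (T w⁻¹))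
    -- the seminormal Specht modules S(λ) and S(λ')
    (μ : YoungDiagram) (hμ : μ.card = n)
    (act : H →ₗ[F] Module.End F (StdTab μ n → F))
    (hact : SpechtRep q sqm1 sq n T μ act)
    (act' : H →ₗ[F] Module.End F (StdTab μ.transpose n → F))
    (hact' : SpechtRep q sqm1 sq n T μ.transpose act')
    (w : Equiv.Perm (Fin n)) (t : StdTab μ n) :
    act (hash (T w)) (Pi.single t (1 : F) : StdTab μ n → F)
      = crossTau F μ n
          (act' (T w) (Pi.single (conjTab t) (1 : F) : StdTab μ.transpose n → F)) := by
  let twist := (tauEquiv F μ n).conjAlgEquiv F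
  have hgen : ∀ i, i + 1 < n → act (hash (T (sTr n i))) = twist (act' (T (sTr n i))) := by
    intro i hi
    refine LinearMap.pi_ext' fun u => LinearMap.ext_ring ?_
    simp only [twist, LinearEquiv.conjAlgEquiv_apply, LinearMap.comp_apply, LinearMap.single_apply,
      LinearEquiv.coe_coe, tauEquiv_symm_single, tauEquiv_apply,
      crossTau_act_T_sTr_single hq0 hqint hsq0 hμ hact hact' hi, hash_T_sTr hT1 hmul2 hash hhash hi,
      map_sub, map_smul, hact.1, LinearMap.sub_apply, LinearMap.smul_apply, Module.End.one_apply]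
  obtain ⟨l, hlen, hl, rfl⟩ := exists_reduced_word w
  have hprod : act (hash (l.map fun i => T (sTr n i)).prod) =
      twist (act' (l.map fun i => T (sTr n i)).prod) := by
    refine map_list_prod_eq_of_antiMul (f := fun x => act (hash x)) (g := fun x => twist (act' x))
      (by rw [map_one, hact.1]) (by rw [hact'.1, map_one])
      (fun a b => by rw [map_mul, hact.2.1]) (fun a b => by rw [hact'.2.1, map_mul]) ?_
    simp only [List.mem_map]
    rintro _ ⟨i, hi, rfl⟩
    exact hgen i (hl i hi)
  rw [T_prod_of_reduced hT1 hmul1 hl hlen, hprod]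
  simp only [twist, LinearEquiv.conjAlgEquiv_apply, LinearMap.comp_apply, LinearEquiv.coe_coe,
    tauEquiv_symm_single, tauEquiv_apply]

/-- Proposition `twist`: for every `w ∈ 𝔖ₙ` and every standard
`λ`-tableau `t`, `v_t T_w^# = τ(v_{t'} T_w)`, where `τ : S(λ') → S(λ)` is the linear
map `v_s ↦ v_{s'}`. -/
theorem specht_hash_twist
    {F : Type*} [Field F] (q : F) (hq0 : q ≠ 0) (hq1 : q ≠ 1) (n : ℕ)
    (hqint : ∀ k : ℕ, 1 ≤ k → k ≤ n → qint q (k : ℤ) ≠ 0)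
    -- the chosen square roots √(−1) and √([k]) in F
    (sqm1 : F) (hsqm1 : sqm1 ^ 2 = -1)
    (sq : ℕ → F) (hsq0 : sq 0 = 0)
    (hsq : ∀ k : ℕ, 1 ≤ k → k ≤ n → sq k ^ 2 = qint q (k : ℤ))
    {H : Type*} [Ring H] [Algebra F H]
    -- the Iwahori–Hecke algebra of type A with its basis of standard elements T_w
    (T : Equiv.Perm (Fin n) → H)
    (bT : Module.Basis (Equiv.Perm (Fin n)) F H) (hbT : ∀ w, bT w = T w)
    (hT1 : T 1 = 1)
    (hTunit : ∀ w, IsUnit (T w))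
    (hmul1 : ∀ (w : Equiv.Perm (Fin n)) (i : ℕ), i + 1 < n →
      len n (w * sTr n i) = len n w + 1 → T w * T (sTr n i) = T (w * sTr n i))
    (hmul2 : ∀ (w : Equiv.Perm (Fin n)) (i : ℕ), i + 1 < n →
      len n (w * sTr n i) + 1 = len n w →
      T w * T (sTr n i) = T (w * sTr n i) + (q - q⁻¹) • T w)
    -- the hash involution
    (hash : H ≃ₐ[F] H)
    (hhash : ∀ w, hash (T w) = ((-1 : F) ^ len n w) • Ring.inverse (T w⁻¹))
    -- the seminormal Specht modules S(λ) and S(λ')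
    (μ : YoungDiagram) (hμ : μ.card = n)
    (act : H →ₗ[F] Module.End F (StdTab μ n → F))
    (hact : SpechtRep q sqm1 sq n T μ act)
    (act' : H →ₗ[F] Module.End F (StdTab μ.transpose n → F))
    (hact' : SpechtRep q sqm1 sq n T μ.transpose act')
    (w : Equiv.Perm (Fin n)) (t : StdTab μ n) :
    act (hash (T w)) (Pi.single t (1 : F) : StdTab μ n → F)
      = crossTau F μ n
          (act' (T w) (Pi.single (conjTab t) (1 : F) : StdTab μ.transpose n → F)) :=
  specht_hash_twist_general q hq0 n hqint sqm1 sq hsq0 T hT1 hmul1 hmul2 hash hhash μ hμ act hact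
    act' hact' w t

end
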